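/- Let βv, μv > 0, let β, γ : [0, ∞) → [0, ∞) be continuous with β integrable on [0, ∞), and let p∞ : [0, ∞) → [0, ∞) be measurable with ∫_0^∞ p∞(a) da = 1. For B > 0 define κ(B) := βv·B/(μv+βv·B), s_B(a) := exp(−κ(B)·∫_0^a β(h) dh), i_B(a) := κ(B)·∫_0^a exp(−∫_τ^a γ(h) dh)·β(τ)·s_B(τ) dτ, and H(B) := ∫_0^∞ p∞(a)·i_B(a) da. If R0 := (βv/μv)·∫_0^∞ p∞(a)·(∫_0^a β(τ)·exp(−∫_τ^a γ(h) dh) dτ) da > 1, then there exists a unique B* ∈ (0, 1) with H(B*) = B*. -/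

import Mathlib

open MeasureTheory

/-- Effective transmission factor `κ(B) = βv·B/(μv+βv·B)`. -/
noncomputable def kappaFn (βv μv B : ℝ) : ℝ := βv * B / (μv + βv * B)

/-- Steady-state susceptible age profile `s_B`. -/
noncomputable def sProf (βv μv : ℝ) (β : ℝ → ℝ) (B a : ℝ) : ℝ :=
  Real.exp (-(kappaFn βv μv B * ∫ h in (0 : ℝ)..a, β h))

/-- Steady-state infected age profile `i_B`. -/
noncomputable def iProf (βv μv : ℝ) (β γ : ℝ → ℝ) (B a : ℝ) : ℝ :=
  kappaFn βv μv B * ∫ τ in (0 : ℝ)..a,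
    Real.exp (-∫ h in τ..a, γ h) * β τ * sProf βv μv β B τ

/-- Force-of-infection map `H(B) = ∫_0^∞ p∞(a)·i_B(a) da`. -/
noncomputable def Hmap (βv μv : ℝ) (β γ pinf : ℝ → ℝ) (B : ℝ) : ℝ :=
  ∫ a in Set.Ioi (0 : ℝ), pinf a * iProf βv μv β γ B a

/-- Basic reproductive number `R0`. -/
noncomputable def R0 (βv μv : ℝ) (β γ pinf : ℝ → ℝ) : ℝ :=
  (βv / μv) * ∫ a in Set.Ioi (0 : ℝ),
    pinf a * ∫ τ in (0 : ℝ)..a, β τ * Real.exp (-∫ h in τ..a, γ h)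

/-!
Write `κ = κ(B) = B · βv / (μv + βv B)`. Then `i_B = κ · J_κ`, where `J_k(a)` is the infected
profile at effective force `k`, so `H(B) = κ φ(κ)` with `φ(k) = ∫ p∞ J_k`, and `R₀ = (βv/μv) φ(0)`.
A positive fixed point is a root of `G(B) = 1`, `G(B) = βv / (μv + βv B) · φ(κ(B))`.
Here `G(0) = R₀ > 1`; `φ` is antitone, and continuous by dominated convergence since
`0 ≤ J_k ≤ ∫ β`; and `k φ(k) ≤ 1 - exp(-k ∫ β) < 1` because
`∫_0^a k β(τ) exp(-k ∫_0^τ β) dτ = 1 - exp(-k ∫_0^a β)`. Hence `H(B) - B` changes sign on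
`(0, 1)`, and the fixed point is unique because `G` is strictly decreasing wherever it is positive.
Rates given on `[0, ∞)` are first extended continuously to `ℝ`; this changes none of the integrals.
-/

open Set Real

theorem ContinuousOn.exists_continuous_eqOn_Ici {E : Type*} [TopologicalSpace E] {f : ℝ → E}
    {c : ℝ} (hf : ContinuousOn f (Ici c)) :
    ∃ g : ℝ → E, Continuous g ∧ EqOn f g (Ici c) ∧ range g ⊆ f '' Ici c :=
  ⟨fun x => f (max x c), hf.comp_continuous (by fun_prop) fun x => le_max_right x c,
    fun x hx => by simp [max_eq_left (mem_Ici.1 hx)],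
    by rintro _ ⟨x, rfl⟩; exact ⟨_, le_max_right x c, rfl⟩⟩

@[fun_prop]
theorem Continuous.intervalIntegral_endpoints {X E : Type*} [TopologicalSpace X]
    [NormedAddCommGroup E] [NormedSpace ℝ E] {f : ℝ → E} (hf : Continuous f) {u v : X → ℝ} (hu : Continuous u) (hv : Continuous v) :
    Continuous fun x => ∫ t in u x..v x, f t := by
  have hF : Continuous fun y => ∫ t in (0 : ℝ)..y, f t :=
    intervalIntegral.continuous_primitive (fun _ _ => hf.intervalIntegrable _ _) 0
  refine ((hF.comp hv).sub (hF.comp hu)).congr fun x => ?_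
  exact intervalIntegral.integral_interval_sub_left (hf.intervalIntegrable _ _)
    (hf.intervalIntegrable _ _)

theorem intervalIntegral_le_integral_Ioi {f : ℝ → ℝ} {c a : ℝ} (hca : c ≤ a)
    (hf : IntegrableOn f (Ioi c)) (hf0 : ∀ x ∈ Ioi c, 0 ≤ f x) :
    ∫ x in c..a, f x ≤ ∫ x in Ioi c, f x := by
  rw [intervalIntegral.integral_of_le hca]
  exact setIntegral_mono_set hf (ae_restrict_of_forall_mem measurableSet_Ioi hf0)
    Ioc_subset_Ioi_self.eventuallyLE

theorem integral_mul_exp_neg_mul_primitive {f : ℝ → ℝ} (hf : Continuous f) (k a : ℝ) :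
    ∫ τ in (0 : ℝ)..a, k * f τ * exp (-(k * ∫ h in (0 : ℝ)..τ, f h))
      = 1 - exp (-(k * ∫ h in (0 : ℝ)..a, f h)) := by
  have hderiv : ∀ x ∈ uIcc 0 a, HasDerivAt (fun y => -exp (-(k * ∫ h in (0 : ℝ)..y, f h)))
      (k * f x * exp (-(k * ∫ h in (0 : ℝ)..x, f h))) x := fun x _ => by
    have hK : HasDerivAt (fun y => k * ∫ h in (0 : ℝ)..y, f h) (k * f x) x :=
      ((hf.integral_hasStrictDerivAt 0 x).hasDerivAt).const_mul k
    have h := hK.neg.exp.neg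
    simp only [Pi.neg_def] at h
    exact h.congr_deriv (by ring)
  rw [intervalIntegral.integral_eq_sub_of_hasDerivAt hderiv
    (Continuous.intervalIntegrable (by fun_prop) _ _)]
  simp
  ring

noncomputable def infectionKernel (β γ : ℝ → ℝ) (k a : ℝ) : ℝ :=
  ∫ τ in (0 : ℝ)..a, exp (-∫ h in τ..a, γ h) * β τ * exp (-(k * ∫ h in (0 : ℝ)..τ, β h))

section infectionKernel

variable {β γ : ℝ → ℝ}

theorem iProf_eq_kappaFn_mul_infectionKernel (βv μv B a : ℝ) :
    iProf βv μv β γ B a = kappaFn βv μv B * infectionKernel β γ (kappaFn βv μv B) a :=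
  rfl

theorem infectionKernel_congr {β' γ' : ℝ → ℝ} (hβ : EqOn β β' (Ici 0)) (hγ : EqOn γ γ' (Ici 0))
    (k : ℝ) {a : ℝ} (ha : 0 ≤ a) : infectionKernel β γ k a = infectionKernel β' γ' k a := by
  have hsub : ∀ {x y : ℝ}, 0 ≤ x → 0 ≤ y → uIcc x y ⊆ Ici 0 := fun hx hy _ hz =>
    le_trans (le_min hx hy) hz.1
  refine intervalIntegral.integral_congr fun τ hτ => ?_
  have hτ0 : 0 ≤ τ := hsub le_rfl ha hτ
  rw [intervalIntegral.integral_congr (hγ.mono (hsub hτ0 ha)),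
    intervalIntegral.integral_congr (hβ.mono (hsub le_rfl hτ0)), hβ hτ0]

theorem continuous_infectionKernel (hβ : Continuous β) (hγ : Continuous γ) :
    Continuous fun x : ℝ × ℝ => infectionKernel β γ x.1 x.2 := by
  unfold infectionKernel
  fun_prop

theorem infectionKernel_nonneg (hβ0 : ∀ x, 0 ≤ β x) (k : ℝ) {a : ℝ} (ha : 0 ≤ a) :
    0 ≤ infectionKernel β γ k a :=
  intervalIntegral.integral_nonneg ha fun τ _ => by have := hβ0 τ; positivity

theorem infectionKernel_antitone (hβ : Continuous β) (hγ : Continuous γ) (hβ0 : ∀ x, 0 ≤ β x)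
    {a : ℝ} (ha : 0 ≤ a) : Antitone fun k => infectionKernel β γ k a := by
  intro k₁ k₂ hk
  refine intervalIntegral.integral_mono_on ha (Continuous.intervalIntegrable (by fun_prop) _ _)
    (Continuous.intervalIntegrable (by fun_prop) _ _) fun τ hτ => ?_
  have hB : 0 ≤ ∫ h in (0 : ℝ)..τ, β h := intervalIntegral.integral_nonneg hτ.1 fun h _ => hβ0 h
  have := hβ0 τ
  gcongr

theorem infectionKernel_le_integral_mul_exp (hβ : Continuous β) (hγ : Continuous γ)
    (hβ0 : ∀ x, 0 ≤ β x) (hγ0 : ∀ x, 0 ≤ γ x) (k : ℝ) {a : ℝ} (ha : 0 ≤ a) :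
    infectionKernel β γ k a ≤ ∫ τ in (0 : ℝ)..a, β τ * exp (-(k * ∫ h in (0 : ℝ)..τ, β h)) := by
  refine intervalIntegral.integral_mono_on ha (Continuous.intervalIntegrable (by fun_prop) _ _)
    (Continuous.intervalIntegrable (by fun_prop) _ _) fun τ hτ => ?_
  have hΓ : exp (-∫ h in τ..a, γ h) ≤ 1 :=
    exp_le_one_iff.2 (neg_nonpos.2 (intervalIntegral.integral_nonneg hτ.2 fun h _ => hγ0 h))
  have := hβ0 τ
  calc exp (-∫ h in τ..a, γ h) * β τ * exp (-(k * ∫ h in (0 : ℝ)..τ, β h))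
      ≤ 1 * β τ * exp (-(k * ∫ h in (0 : ℝ)..τ, β h)) := by gcongr
    _ = β τ * exp (-(k * ∫ h in (0 : ℝ)..τ, β h)) := by rw [one_mul]

theorem mul_infectionKernel_le (hβ : Continuous β) (hγ : Continuous γ) (hβ0 : ∀ x, 0 ≤ β x)
    (hγ0 : ∀ x, 0 ≤ γ x) {k a : ℝ} (hk : 0 ≤ k) (ha : 0 ≤ a) :
    k * infectionKernel β γ k a ≤ 1 - exp (-(k * ∫ h in (0 : ℝ)..a, β h)) :=
  calc k * infectionKernel β γ k a
      ≤ k * ∫ τ in (0 : ℝ)..a, β τ * exp (-(k * ∫ h in (0 : ℝ)..τ, β h)) := by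
        gcongr; exact infectionKernel_le_integral_mul_exp hβ hγ hβ0 hγ0 k ha
    _ = 1 - exp (-(k * ∫ h in (0 : ℝ)..a, β h)) := by
        rw [← integral_mul_exp_neg_mul_primitive hβ, ← intervalIntegral.integral_const_mul]
        simp only [mul_assoc]

theorem infectionKernel_le_integral (hβ : Continuous β) (hγ : Continuous γ) (hβ0 : ∀ x, 0 ≤ β x)
    (hγ0 : ∀ x, 0 ≤ γ x) {k a : ℝ} (hk : 0 ≤ k) (ha : 0 ≤ a) :
    infectionKernel β γ k a ≤ ∫ h in (0 : ℝ)..a, β h :=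
  calc infectionKernel β γ k a ≤ infectionKernel β γ 0 a := infectionKernel_antitone hβ hγ hβ0 ha hk
    _ ≤ ∫ τ in (0 : ℝ)..a, β τ * exp (-(0 * ∫ h in (0 : ℝ)..τ, β h)) :=
        infectionKernel_le_integral_mul_exp hβ hγ hβ0 hγ0 0 ha
    _ = ∫ h in (0 : ℝ)..a, β h := by simp

end infectionKernel

noncomputable def meanInfection (β γ p : ℝ → ℝ) (k : ℝ) : ℝ :=
  ∫ a in Ioi (0 : ℝ), p a * infectionKernel β γ k a

section meanInfection

variable {β γ p : ℝ → ℝ}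

theorem Hmap_eq_kappaFn_mul_meanInfection (βv μv B : ℝ) :
    Hmap βv μv β γ p B = kappaFn βv μv B * meanInfection β γ p (kappaFn βv μv B) := by
  rw [Hmap, meanInfection, ← integral_const_mul]
  refine integral_congr_ae (ae_of_all _ fun a => ?_)
  simp only [iProf_eq_kappaFn_mul_infectionKernel]
  ring

theorem R0_eq_mul_meanInfection_zero (βv μv : ℝ) :
    R0 βv μv β γ p = βv / μv * meanInfection β γ p 0 := by
  simp only [R0, meanInfection, infectionKernel, zero_mul, neg_zero, exp_zero, mul_one,
    mul_comm (β _)]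

theorem meanInfection_congr {β' γ' : ℝ → ℝ} (hβ : EqOn β β' (Ici 0)) (hγ : EqOn γ γ' (Ici 0))
    (k : ℝ) : meanInfection β γ p k = meanInfection β' γ' p k :=
  setIntegral_congr_fun measurableSet_Ioi fun _ ha => by
    simp only [infectionKernel_congr hβ hγ k (le_of_lt ha)]

theorem norm_mul_infectionKernel_le (hβ : Continuous β) (hγ : Continuous γ)
    (hβ0 : ∀ x, 0 ≤ β x) (hγ0 : ∀ x, 0 ≤ γ x) (hβi : IntegrableOn β (Ioi 0))
    (hp0 : ∀ a ∈ Ioi (0 : ℝ), 0 ≤ p a) {k : ℝ} (hk : 0 ≤ k) {a : ℝ} (ha : a ∈ Ioi 0) :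
    ‖p a * infectionKernel β γ k a‖ ≤ (∫ x in Ioi (0 : ℝ), β x) * p a := by
  rw [Real.norm_of_nonneg (mul_nonneg (hp0 a ha) (infectionKernel_nonneg hβ0 k (le_of_lt ha))),
    mul_comm]
  gcongr
  · exact hp0 a ha
  · exact (infectionKernel_le_integral hβ hγ hβ0 hγ0 hk (le_of_lt ha)).trans
      (intervalIntegral_le_integral_Ioi (le_of_lt ha) hβi fun x _ => hβ0 x)

theorem integrableOn_mul_infectionKernel (hβ : Continuous β) (hγ : Continuous γ)
    (hβ0 : ∀ x, 0 ≤ β x) (hγ0 : ∀ x, 0 ≤ γ x) (hβi : IntegrableOn β (Ioi 0)) (hp : Measurable p)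
    (hp0 : ∀ a ∈ Ioi (0 : ℝ), 0 ≤ p a) (hpi : IntegrableOn p (Ioi 0)) {k : ℝ} (hk : 0 ≤ k) :
    IntegrableOn (fun a => p a * infectionKernel β γ k a) (Ioi 0) := by
  have hJ : Continuous fun a => infectionKernel β γ k a :=
    (continuous_infectionKernel hβ hγ).comp (by fun_prop : Continuous fun a : ℝ => (k, a))
  exact (hpi.const_mul _).mono' (hp.aestronglyMeasurable.mul hJ.aestronglyMeasurable)
    (ae_restrict_of_forall_mem measurableSet_Ioi fun a ha =>
      norm_mul_infectionKernel_le hβ hγ hβ0 hγ0 hβi hp0 hk ha)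

theorem meanInfection_antitoneOn (hβ : Continuous β) (hγ : Continuous γ)
    (hβ0 : ∀ x, 0 ≤ β x) (hγ0 : ∀ x, 0 ≤ γ x) (hβi : IntegrableOn β (Ioi 0)) (hp : Measurable p)
    (hp0 : ∀ a ∈ Ioi (0 : ℝ), 0 ≤ p a) (hpi : IntegrableOn p (Ioi 0)) :
    AntitoneOn (meanInfection β γ p) (Ici 0) := fun _ hk₁ _ hk₂ hk =>
  setIntegral_mono_on (integrableOn_mul_infectionKernel hβ hγ hβ0 hγ0 hβi hp hp0 hpi hk₂)
    (integrableOn_mul_infectionKernel hβ hγ hβ0 hγ0 hβi hp hp0 hpi hk₁) measurableSet_Ioi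
    fun a ha => mul_le_mul_of_nonneg_left
      (infectionKernel_antitone hβ hγ hβ0 (le_of_lt ha) hk) (hp0 a ha)

theorem continuousOn_meanInfection (hβ : Continuous β) (hγ : Continuous γ)
    (hβ0 : ∀ x, 0 ≤ β x) (hγ0 : ∀ x, 0 ≤ γ x) (hβi : IntegrableOn β (Ioi 0)) (hp : Measurable p)
    (hp0 : ∀ a ∈ Ioi (0 : ℝ), 0 ≤ p a) (hpi : IntegrableOn p (Ioi 0)) :
    ContinuousOn (meanInfection β γ p) (Ici 0) := by
  refine continuousOn_of_dominated
    (fun k hk => (integrableOn_mul_infectionKernel hβ hγ hβ0 hγ0 hβi hp hp0 hpi hk).1)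
    (fun k hk => ae_restrict_of_forall_mem measurableSet_Ioi fun a ha =>
      norm_mul_infectionKernel_le hβ hγ hβ0 hγ0 hβi hp0 hk ha) (hpi.const_mul _)
    (ae_of_all _ fun a => Continuous.continuousOn ?_)
  exact continuous_const.mul
    ((continuous_infectionKernel hβ hγ).comp (by fun_prop : Continuous fun k : ℝ => (k, a)))

theorem mul_meanInfection_lt_one (hβ : Continuous β) (hγ : Continuous γ)
    (hβ0 : ∀ x, 0 ≤ β x) (hγ0 : ∀ x, 0 ≤ γ x) (hβi : IntegrableOn β (Ioi 0)) (hp : Measurable p)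
    (hp0 : ∀ a ∈ Ioi (0 : ℝ), 0 ≤ p a) (hp1 : ∫ a in Ioi (0 : ℝ), p a = 1) {k : ℝ}
    (hk : 0 ≤ k) : k * meanInfection β γ p k < 1 := by
  have hpi : IntegrableOn p (Ioi 0) :=
    Integrable.of_integral_ne_zero (by rw [hp1]; exact one_ne_zero)
  set M := ∫ x in Ioi (0 : ℝ), β x
  calc k * meanInfection β γ p k = ∫ a in Ioi (0 : ℝ), k * (p a * infectionKernel β γ k a) :=
        (integral_const_mul _ _).symm
    _ ≤ ∫ a in Ioi (0 : ℝ), p a * (1 - exp (-(k * M))) := by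
        refine setIntegral_mono_on
          ((integrableOn_mul_infectionKernel hβ hγ hβ0 hγ0 hβi hp hp0 hpi hk).const_mul k)
          (hpi.mul_const _) measurableSet_Ioi fun a ha => ?_
        have hKM : ∫ h in (0 : ℝ)..a, β h ≤ M :=
          intervalIntegral_le_integral_Ioi (le_of_lt ha) hβi fun x _ => hβ0 x
        have hkJ := mul_infectionKernel_le hβ hγ hβ0 hγ0 hk (le_of_lt ha)
        rw [mul_left_comm]
        gcongr
        · exact hp0 a ha
        · exact hkJ.trans (by gcongr)
    _ = 1 - exp (-(k * M)) := by rw [integral_mul_const, hp1, one_mul]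
    _ < 1 := sub_lt_self _ (exp_pos _)

end meanInfection

theorem kappaFn_eq_mul (βv μv B : ℝ) : kappaFn βv μv B = B * (βv / (μv + βv * B)) := by
  rw [kappaFn]; ring

section kappaFn

variable {βv μv : ℝ}

theorem kappaFn_nonneg (hβv : 0 < βv) (hμv : 0 < μv) {B : ℝ} (hB : 0 ≤ B) :
    0 ≤ kappaFn βv μv B := by
  unfold kappaFn; positivity

theorem kappaFn_lt_one (hβv : 0 < βv) (hμv : 0 < μv) {B : ℝ} (hB : 0 ≤ B) :
    kappaFn βv μv B < 1 := by
  rw [kappaFn, div_lt_one (by positivity)]; linarith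

theorem monotoneOn_kappaFn (hβv : 0 < βv) (hμv : 0 < μv) : MonotoneOn (kappaFn βv μv) (Ici 0) := by
  intro B₁ hB₁ B₂ hB₂ h
  have hB₁ : (0 : ℝ) ≤ B₁ := hB₁
  have hB₂ : (0 : ℝ) ≤ B₂ := hB₂
  unfold kappaFn
  rw [div_le_div_iff₀ (by positivity) (by positivity)]
  nlinarith [mul_le_mul_of_nonneg_left h (mul_nonneg hβv.le hμv.le)]

theorem continuousOn_kappaFn (hβv : 0 < βv) (hμv : 0 < μv) : ContinuousOn (kappaFn βv μv) (Ici 0) :=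
  ContinuousOn.div (by fun_prop) (by fun_prop) fun B (hB : 0 ≤ B) => by positivity

end kappaFn

section fixedPoint

variable {βv μv : ℝ} {φ : ℝ → ℝ}

theorem kappaFn_mul_eq_self_iff {B : ℝ} (hB : B ≠ 0) :
    kappaFn βv μv B * φ (kappaFn βv μv B) = B ↔ βv / (μv + βv * B) * φ (kappaFn βv μv B) = 1 := by
  nth_rw 1 [kappaFn_eq_mul]
  rw [mul_assoc, mul_eq_left₀ hB]

theorem kappaFn_mul_fixedPoint_unique (hβv : 0 < βv) (hμv : 0 < μv) (hφ : AntitoneOn φ (Ici 0))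
    {x y : ℝ} (hx : 0 < x) (hy : 0 < y) (hfx : kappaFn βv μv x * φ (kappaFn βv μv x) = x)
    (hfy : kappaFn βv μv y * φ (kappaFn βv μv y) = y) : x = y := by
  have hlt : ∀ x y : ℝ, 0 < x → x < y → kappaFn βv μv x * φ (kappaFn βv μv x) = x →
      kappaFn βv μv y * φ (kappaFn βv μv y) = y → False := by
    intro x y hx hxy hfx hfy
    have hy : 0 < y := hx.trans hxy
    rw [kappaFn_mul_eq_self_iff hx.ne'] at hfx
    rw [kappaFn_mul_eq_self_iff hy.ne'] at hfy
    have hcy : 0 < βv / (μv + βv * y) := by positivity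
    have hcxy : βv / (μv + βv * y) < βv / (μv + βv * x) :=
      div_lt_div_of_pos_left hβv (by positivity) (by nlinarith)
    have hφy : 0 < φ (kappaFn βv μv y) := pos_of_mul_pos_right (hfy ▸ one_pos) hcy.le
    have hφxy : φ (kappaFn βv μv y) ≤ φ (kappaFn βv μv x) :=
      hφ (kappaFn_nonneg hβv hμv hx.le) (kappaFn_nonneg hβv hμv hy.le)
        (monotoneOn_kappaFn hβv hμv hx.le hy.le hxy.le)
    have : βv / (μv + βv * y) * φ (kappaFn βv μv y) < βv / (μv + βv * x) * φ (kappaFn βv μv x) :=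
      calc _ < βv / (μv + βv * x) * φ (kappaFn βv μv y) := by gcongr
        _ ≤ _ := by gcongr
    linarith
  exact le_antisymm (not_lt.1 fun h => hlt y x hy h hfy hfx)
    (not_lt.1 fun h => hlt x y hx h hfx hfy)

theorem exists_kappaFn_mul_fixedPoint (hβv : 0 < βv) (hμv : 0 < μv)
    (hφ : ContinuousOn φ (Ici 0)) (h0 : 1 < βv / μv * φ 0)
    (h1 : ∀ k ∈ Ico (0 : ℝ) 1, k * φ k < 1) :
    ∃ B ∈ Ioo (0 : ℝ) 1, kappaFn βv μv B * φ (kappaFn βv μv B) = B := by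
  have hκ : ContinuousOn (fun B => φ (kappaFn βv μv B)) (Ici 0) :=
    hφ.comp (continuousOn_kappaFn hβv hμv) fun B hB => kappaFn_nonneg hβv hμv hB
  have hG : ContinuousWithinAt (fun B => βv / (μv + βv * B) * φ (kappaFn βv μv B)) (Ioi 0) 0 :=
    ((ContinuousOn.div (by fun_prop) (by fun_prop) fun B (hB : 0 ≤ B) => by positivity).mul hκ
      0 self_mem_Ici).mono Ioi_subset_Ici_self
  obtain ⟨ε, hεG, hε⟩ : ∃ ε, 1 < βv / (μv + βv * ε) * φ (kappaFn βv μv ε) ∧ ε ∈ Ioo (0 : ℝ) 1 :=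
    ((hG.eventually_const_lt (by simpa [kappaFn] using h0)).and (Ioo_mem_nhdsGT one_pos)).exists
  have hF : ContinuousOn (fun B => kappaFn βv μv B * φ (kappaFn βv μv B) - B) (Icc ε 1) :=
    (((continuousOn_kappaFn hβv hμv).mul hκ).sub continuousOn_id).mono
      fun B hB => hε.1.le.trans hB.1
  have hF1 : kappaFn βv μv 1 * φ (kappaFn βv μv 1) - 1 < 0 :=
    sub_neg.2 (h1 _ ⟨kappaFn_nonneg hβv hμv zero_le_one, kappaFn_lt_one hβv hμv zero_le_one⟩)
  have hFε : 0 < kappaFn βv μv ε * φ (kappaFn βv μv ε) - ε := by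
    nth_rw 1 [kappaFn_eq_mul]
    rw [mul_assoc, sub_pos]
    exact lt_mul_of_one_lt_right hε.1 hεG
  obtain ⟨B, hB, hBF⟩ := intermediate_value_Ioo' hε.2.le hF ⟨hF1, hFε⟩
  exact ⟨B, ⟨hε.1.trans hB.1, hB.2⟩, sub_eq_zero.1 hBF⟩

theorem existsUnique_kappaFn_mul_fixedPoint (hβv : 0 < βv) (hμv : 0 < μv)
    (hφc : ContinuousOn φ (Ici 0)) (hφa : AntitoneOn φ (Ici 0))
    (h0 : 1 < βv / μv * φ 0) (h1 : ∀ k ∈ Ico (0 : ℝ) 1, k * φ k < 1) :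
    ∃! B, B ∈ Ioo (0 : ℝ) 1 ∧ kappaFn βv μv B * φ (kappaFn βv μv B) = B := by
  obtain ⟨B, hB, hBfix⟩ := exists_kappaFn_mul_fixedPoint hβv hμv hφc h0 h1
  exact ⟨B, ⟨hB, hBfix⟩, fun y ⟨hy, hyfix⟩ =>
    kappaFn_mul_fixedPoint_unique hβv hμv hφa hy.1 hB.1 hyfix hBfix⟩

end fixedPoint

/-- if `R0 > 1`, there exists a unique `B* ∈ (0,1)` with `H(B*) = B*`. -/
theorem endemic_fixed_point
    (βv μv : ℝ) (hβv : 0 < βv) (hμv : 0 < μv)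
    (β γ : ℝ → ℝ) (hβ_cont : ContinuousOn β (Set.Ici 0)) (hγ_cont : ContinuousOn γ (Set.Ici 0))
    (hβ_nonneg : ∀ a : ℝ, 0 ≤ a → 0 ≤ β a) (hγ_nonneg : ∀ a : ℝ, 0 ≤ a → 0 ≤ γ a)
    (hβ_int : MeasureTheory.IntegrableOn β (Set.Ioi 0))
    (pinf : ℝ → ℝ) (hp_meas : Measurable pinf) (hp_nonneg : ∀ a : ℝ, 0 ≤ a → 0 ≤ pinf a)
    (hp_int : ∫ a in Set.Ioi (0 : ℝ), pinf a = 1)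
    (hR0 : 1 < R0 βv μv β γ pinf)
    : ∃! Bstar : ℝ, Bstar ∈ Set.Ioo (0 : ℝ) 1 ∧ Hmap βv μv β γ pinf Bstar = Bstar := by
  obtain ⟨β', hβ', hββ', hβ'range⟩ := hβ_cont.exists_continuous_eqOn_Ici
  obtain ⟨γ', hγ', hγγ', hγ'range⟩ := hγ_cont.exists_continuous_eqOn_Ici
  have hβ'0 : ∀ x, 0 ≤ β' x := fun x =>
    (hβ'range.trans (image_subset_iff.2 hβ_nonneg)) (mem_range_self x)
  have hγ'0 : ∀ x, 0 ≤ γ' x := fun x =>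
    (hγ'range.trans (image_subset_iff.2 hγ_nonneg)) (mem_range_self x)
  have hβ'i : IntegrableOn β' (Ioi 0) :=
    hβ_int.congr_fun (hββ'.mono Ioi_subset_Ici_self) measurableSet_Ioi
  have hp0 : ∀ a ∈ Ioi (0 : ℝ), 0 ≤ pinf a := fun a ha => hp_nonneg a ha.le
  have hpi : IntegrableOn pinf (Ioi 0) :=
    Integrable.of_integral_ne_zero (by rw [hp_int]; exact one_ne_zero)
  have hH : ∀ B, Hmap βv μv β γ pinf B
      = kappaFn βv μv B * meanInfection β' γ' pinf (kappaFn βv μv B) := fun B => by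
    rw [Hmap_eq_kappaFn_mul_meanInfection, meanInfection_congr hββ' hγγ']
  have hR : R0 βv μv β γ pinf = βv / μv * meanInfection β' γ' pinf 0 := by
    rw [R0_eq_mul_meanInfection_zero, meanInfection_congr hββ' hγγ']
  simp only [hH]
  exact existsUnique_kappaFn_mul_fixedPoint hβv hμv
    (continuousOn_meanInfection hβ' hγ' hβ'0 hγ'0 hβ'i hp_meas hp0 hpi)
    (meanInfection_antitoneOn hβ' hγ' hβ'0 hγ'0 hβ'i hp_meas hp0 hpi) (hR ▸ hR0)
    fun k hk => mul_meanInfection_lt_one hβ' hγ' hβ'0 hγ'0 hβ'i hp_meas hp0 hp_int hk.1
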